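/- arXiv:1708.00125 — 3 statements merged into one kernel-verified Lean document; each statement's English description precedes it below -/
import Mathlib

section
/- The graph obtained from C_5[2K_1] (the lexicographic product of C_5 with the empty graph on 2 vertices) by deleting one vertex is triangle-free and vertex-arrows (P_3, P_3); hence F_v(J_3, J_3; 3) ≤ 9. -/
open SimpleGraph

/-- `Copies G F S`: `G` contains a copy of `F` all of whose vertices lie in `S`. -/
def Copies {α β : Type*} (G : SimpleGraph α) (F : SimpleGraph β) (S : Set α) : Prop :=
  ∃ f : β ↪ α, (∀ a b, F.Adj a b → G.Adj (f a) (f b)) ∧ ∀ a, f a ∈ S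

/-- `G` vertex-arrows the family `F` of graphs. -/
def VArrows {α : Type*} (G : SimpleGraph α) {r : ℕ} {β : Fin r → Type*}
    (F : ∀ i, SimpleGraph (β i)) : Prop :=
  ∀ C : α → Fin r, ∃ i, Copies G (F i) {v | C v = i}

/-- `G` vertex-arrows `(F1, F2)`. -/
def VArrows2 {α β γ : Type*} (G : SimpleGraph α) (F1 : SimpleGraph β) (F2 : SimpleGraph γ) :
    Prop :=
  ∀ C : α → Bool, Copies G F1 {v | C v = true} ∨ Copies G F2 {v | C v = false}

/-- `G` edge-arrows `(F1, F2)`: every red subgraph `R ≤ G` yields a red `F1` or a blue `F2`. -/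
def EArrows2 {α β γ : Type*} (G : SimpleGraph α) (F1 : SimpleGraph β) (F2 : SimpleGraph γ) :
    Prop :=
  ∀ R : SimpleGraph α, R ≤ G → Copies R F1 Set.univ ∨ Copies (G \ R) F2 Set.univ

/-- Vertex Folkman number for a family of target graphs. -/
noncomputable def Fv {r : ℕ} {β : Fin r → Type*} (F : ∀ i, SimpleGraph (β i)) (k : ℕ) : ℕ :=
  sInf {n | ∃ G : SimpleGraph (Fin n), G.CliqueFree k ∧ VArrows G F}

/-- Two-color vertex Folkman number. -/
noncomputable def Fv2 {β γ : Type*} (F1 : SimpleGraph β) (F2 : SimpleGraph γ) (k : ℕ) : ℕ :=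
  sInf {n | ∃ G : SimpleGraph (Fin n), G.CliqueFree k ∧ VArrows2 G F1 F2}

/-- Two-color edge Folkman number. -/
noncomputable def Fe2 {β γ : Type*} (F1 : SimpleGraph β) (F2 : SimpleGraph γ) (k : ℕ) : ℕ :=
  sInf {n | ∃ G : SimpleGraph (Fin n), G.CliqueFree k ∧ EArrows2 G F1 F2}

/-- Lexicographic product `G[H]`. -/
def lexProd {α β : Type*} (G : SimpleGraph α) (H : SimpleGraph β) : SimpleGraph (α × β) where
  Adj x y := G.Adj x.1 y.1 ∨ (x.1 = y.1 ∧ H.Adj x.2 y.2)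
  symm := ⟨by rintro x y (h | ⟨e, h⟩); exacts [Or.inl h.symm, Or.inr ⟨e.symm, h.symm⟩]⟩
  loopless := ⟨by rintro x (h | ⟨_, h⟩); exacts [G.loopless.irrefl _ h, H.loopless.irrefl _ h]⟩

/-- Complete graph on `k` vertices. -/
def Kc (k : ℕ) : SimpleGraph (Fin k) := completeGraph (Fin k)

/-- `J_k = K_k - e`: complete graph on `k` vertices minus one edge (the one
joining the two distinguished right-hand vertices). -/
def Jgraph (k : ℕ) : SimpleGraph (Fin (k - 2) ⊕ Fin 2) where
  Adj x y := x ≠ y ∧ ¬(x.isRight ∧ y.isRight)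
  symm := ⟨fun x y ⟨h1, h2⟩ => ⟨h1.symm, fun ⟨a, b⟩ => h2 ⟨b, a⟩⟩⟩
  loopless := ⟨fun x h => h.1 rfl⟩

/-- Cycle on `n` vertices. -/
def cycle (n : ℕ) : SimpleGraph (ZMod n) where
  Adj i j := i ≠ j ∧ (i - j = 1 ∨ j - i = 1)
  symm := ⟨fun i j ⟨h1, h2⟩ => ⟨h1.symm, h2.symm⟩⟩
  loopless := ⟨fun i h => h.1 rfl⟩

/-- Join of two graphs: disjoint union plus all cross edges. -/
def graphJoin {α β : Type*} (G : SimpleGraph α) (H : SimpleGraph β) :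
    SimpleGraph (α ⊕ β) where
  Adj x y := (∃ a b, x = .inl a ∧ y = .inl b ∧ G.Adj a b) ∨
             (∃ a b, x = .inr a ∧ y = .inr b ∧ H.Adj a b) ∨
             (x.isLeft ∧ y.isRight) ∨ (x.isRight ∧ y.isLeft)
  symm := ⟨by
    rintro x y (⟨a, b, rfl, rfl, h⟩ | ⟨a, b, rfl, rfl, h⟩ | ⟨h1, h2⟩ | ⟨h1, h2⟩)
    · exact Or.inl ⟨b, a, rfl, rfl, h.symm⟩
    · exact Or.inr (Or.inl ⟨b, a, rfl, rfl, h.symm⟩)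
    · exact Or.inr (Or.inr (Or.inr ⟨h2, h1⟩))
    · exact Or.inr (Or.inr (Or.inl ⟨h2, h1⟩))⟩
  loopless := ⟨by
    rintro x (⟨a, b, rfl, h, h'⟩ | ⟨a, b, rfl, h, h'⟩ | ⟨h1, h2⟩ | ⟨h1, h2⟩)
    · cases h; exact G.loopless.irrefl _ h'
    · cases h; exact H.loopless.irrefl _ h'
    · cases x <;> simp_all
    · cases x <;> simp_all⟩

/-- Clique number: the largest size of a clique. -/
noncomputable def cliqueNum' {α : Type*} (G : SimpleGraph α) : ℕ :=
  sSup {n | ∃ s : Finset α, G.IsNClique n s}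

/-! In `C₅[2K₁] - x`, each pair `{(k, 0), (k, 1)}` avoiding `x` has at least three common
neighbours. In a 2-colouring without a monochromatic `P₃`, two of these share a colour, which
neither vertex of the pair may have, so the pair is monochromatic; and every common neighbour of
a monochromatic pair gets the other colour. Hence the colours alternate around the five pairs of
`C₅` (the surviving vertex of `x`'s pair closes the cycle), which is impossible as 5 is odd.
Translations of `ZMod 5 × Fin 2` are automorphisms, so it suffices to delete `x = 0`.
Triangle-freeness comes from the projection onto the triangle-free `C₅`. -/

namespace SimpleGraph

theorem CliqueFree.of_hom {α β : Type*} {G : SimpleGraph α} {H : SimpleGraph β} {n : ℕ}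
    (f : H →g G) (h : G.CliqueFree n) : H.CliqueFree n := by
  contrapose h
  obtain ⟨c⟩ := (not_cliqueFree_iff_top_isContained n).1 h
  let g : completeGraph (Fin n) →g G := f.comp c.toHom
  exact IsContained.not_cliqueFree ⟨g.toCopy (Hom.injective_of_top_hom g)⟩

end SimpleGraph

section Arrowing

variable {α α' β γ : Type*}

theorem Copies.map {G : SimpleGraph α} {G' : SimpleGraph α'} {F : SimpleGraph β} {S : Set α'}
    (φ : G ↪g G') (h : Copies G F (φ ⁻¹' S)) : Copies G' F S := by
  obtain ⟨f, hadj, hS⟩ := h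
  exact ⟨f.trans φ.toEmbedding, fun a b hab => φ.map_rel_iff.2 (hadj a b hab), hS⟩

theorem VArrows2.map {G : SimpleGraph α} {G' : SimpleGraph α'} {F₁ : SimpleGraph β}
    {F₂ : SimpleGraph γ} (φ : G ↪g G') (h : VArrows2 G F₁ F₂) : VArrows2 G' F₁ F₂ :=
  fun C => (h (C ∘ φ)).imp (Copies.map φ) (Copies.map φ)

theorem fv2_le_of_card_eq [Fintype α] {G : SimpleGraph α} {F₁ : SimpleGraph β}
    {F₂ : SimpleGraph γ} {k n : ℕ} (hn : Fintype.card α = n) (hk : G.CliqueFree k)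
    (h : VArrows2 G F₁ F₂) : Fv2 F₁ F₂ k ≤ n :=
  Nat.sInf_le ⟨G.overFin hn, hk.of_hom (G.overFinIso hn).symm.toHom,
    h.map (G.overFinIso hn).toEmbedding⟩

def HasMonoP3 (G : SimpleGraph α) (C : α → Bool) : Prop :=
  ∃ u v w, v ≠ w ∧ G.Adj u v ∧ G.Adj u w ∧ C v = C u ∧ C w = C u

theorem copies_jgraph_three_of_adj {G : SimpleGraph α} {S : Set α} {u v w : α} (hvw : v ≠ w)
    (huv : G.Adj u v) (huw : G.Adj u w) (hu : u ∈ S) (hv : v ∈ S) (hw : w ∈ S) :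
    Copies G (Jgraph 3) S := by
  let f : Fin 1 ⊕ Fin 2 → α := Sum.elim (fun _ => u) ![v, w]
  have hf : f.Injective := by
    rintro (a | a) (b | b) h <;> fin_cases a <;> fin_cases b <;>
      simp_all [f, huv.ne, huw.ne, huv.ne.symm, huw.ne.symm, hvw.symm]
  refine ⟨⟨f, hf⟩, ?_, ?_⟩
  · rintro (a | a) (b | b) hab <;> fin_cases a <;> fin_cases b <;>
      simp_all [Jgraph, f, huv.symm, huw.symm]
  · rintro (a | a) <;> fin_cases a <;> assumption

theorem vArrows2_jgraph_three_of_hasMonoP3 {G : SimpleGraph α} (h : ∀ C, HasMonoP3 G C) :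
    VArrows2 G (Jgraph 3) (Jgraph 3) := by
  intro C
  obtain ⟨u, v, w, hvw, huv, huw, hv, hw⟩ := h C
  cases hu : C u
  · exact .inr (copies_jgraph_three_of_adj hvw huv huw hu (hv.trans hu) (hw.trans hu))
  · exact .inl (copies_jgraph_three_of_adj hvw huv huw hu (hv.trans hu) (hw.trans hu))

end Arrowing

section NoMonoP3

variable {α : Type*} {G : SimpleGraph α} {C : α → Bool}

theorem color_eq_of_three_common_neighbors (hC : ¬HasMonoP3 G C) {u u' : α}
    (s : Finset α) (hs : 3 ≤ s.card) (hadj : ∀ v ∈ s, G.Adj u v ∧ G.Adj u' v) :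
    C u = C u' := by
  obtain ⟨v, hv, w, hw, hvw, hc⟩ := Finset.exists_ne_map_eq_of_card_lt_of_maps_to
    (t := Finset.univ) (by simpa [Nat.lt_iff_add_one_le] using hs) (f := C)
    (fun _ _ => Finset.mem_coe.2 (Finset.mem_univ _))
  have hu : C u ≠ C v := fun h =>
    hC ⟨u, v, w, hvw, (hadj v hv).1, (hadj w hw).1, h.symm, hc.symm.trans h.symm⟩
  have hu' : C u' ≠ C v := fun h =>
    hC ⟨u', v, w, hvw, (hadj v hv).2, (hadj w hw).2, h.symm, hc.symm.trans h.symm⟩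
  cases h : C u <;> cases h' : C u' <;> cases C v <;> simp_all

theorem color_ne_of_common_neighbor (hC : ¬HasMonoP3 G C) {u u' w : α} (hu : u ≠ u')
    (hc : C u = C u') (hw : G.Adj w u) (hw' : G.Adj w u') : C w ≠ C u :=
  fun h => hC ⟨w, u, u', hu, hw, hw', h.symm, hc.symm.trans h.symm⟩

end NoMonoP3

section Blowup

variable {α β : Type*}

instance (n : ℕ) : DecidableRel (cycle n).Adj :=
  fun i j => inferInstanceAs (Decidable (i ≠ j ∧ (i - j = 1 ∨ j - i = 1)))

instance [DecidableEq α] (G : SimpleGraph α) (H : SimpleGraph β) [DecidableRel G.Adj]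
    [DecidableRel H.Adj] : DecidableRel (lexProd G H).Adj :=
  fun x y => inferInstanceAs (Decidable (G.Adj x.1 y.1 ∨ (x.1 = y.1 ∧ H.Adj x.2 y.2)))

@[simp]
theorem lexProd_bot_adj {G : SimpleGraph α} {x y : α × β} :
    (lexProd G ⊥).Adj x y ↔ G.Adj x.1 y.1 := by
  simp [lexProd]

theorem cycle_adj_add_right_iff {n : ℕ} {i j t : ZMod n} :
    (cycle n).Adj (i + t) (j + t) ↔ (cycle n).Adj i j := by
  simp [cycle]

def lexProdBotFst (G : SimpleGraph α) : lexProd G (⊥ : SimpleGraph β) →g G where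
  toFun := Prod.fst
  map_rel' := lexProd_bot_adj.1

def lexProdCycleAddRight [AddGroup β] {n : ℕ} (t : ZMod n × β) :
    lexProd (cycle n) (⊥ : SimpleGraph β) ≃g lexProd (cycle n) (⊥ : SimpleGraph β) where
  toEquiv := Equiv.addRight t
  map_rel_iff' := by simp [cycle_adj_add_right_iff]

theorem cycle_five_cliqueFree_three : (cycle 5).CliqueFree 3 := by
  intro s hs
  obtain ⟨a, b, c, hab, hac, hbc, -⟩ := is3Clique_iff.1 hs
  revert a b c
  decide

end Blowup

section DeletedBlowup

abbrev cycleFiveBlowup : SimpleGraph (ZMod 5 × Fin 2) := lexProd (cycle 5) ⊥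

theorem hasMonoP3_cycleFiveBlowup_induce_ne_zero
    (C : ({v | v ≠ 0} : Set (ZMod 5 × Fin 2)) → Bool) :
    HasMonoP3 (cycleFiveBlowup.induce {v | v ≠ 0}) C := by
  by_contra hC
  let y : {v : ZMod 5 × Fin 2 // v ≠ 0} := ⟨(0, 1), by decide⟩
  let a₁ : {v : ZMod 5 × Fin 2 // v ≠ 0} := ⟨(1, 0), by decide⟩
  let b₁ : {v : ZMod 5 × Fin 2 // v ≠ 0} := ⟨(1, 1), by decide⟩
  let a₂ : {v : ZMod 5 × Fin 2 // v ≠ 0} := ⟨(2, 0), by decide⟩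
  let b₂ : {v : ZMod 5 × Fin 2 // v ≠ 0} := ⟨(2, 1), by decide⟩
  let a₃ : {v : ZMod 5 × Fin 2 // v ≠ 0} := ⟨(3, 0), by decide⟩
  let b₃ : {v : ZMod 5 × Fin 2 // v ≠ 0} := ⟨(3, 1), by decide⟩
  let a₄ : {v : ZMod 5 × Fin 2 // v ≠ 0} := ⟨(4, 0), by decide⟩
  let b₄ : {v : ZMod 5 × Fin 2 // v ≠ 0} := ⟨(4, 1), by decide⟩
  have h₁ : C a₁ = C b₁ :=
    color_eq_of_three_common_neighbors hC {y, a₂, b₂} (by decide) (by decide)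
  have h₂ : C a₂ = C b₂ :=
    color_eq_of_three_common_neighbors hC {a₁, b₁, a₃} (by decide) (by decide)
  have h₃ : C a₃ = C b₃ :=
    color_eq_of_three_common_neighbors hC {a₂, b₂, a₄} (by decide) (by decide)
  have h₄ : C a₄ = C b₄ :=
    color_eq_of_three_common_neighbors hC {a₃, b₃, y} (by decide) (by decide)
  have h₁₂ := color_ne_of_common_neighbor hC (w := a₂) (by decide) h₁ (by decide) (by decide)
  have h₂₃ := color_ne_of_common_neighbor hC (w := a₃) (by decide) h₂ (by decide) (by decide)
  have h₃₄ := color_ne_of_common_neighbor hC (w := a₄) (by decide) h₃ (by decide) (by decide)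
  have h₄₀ := color_ne_of_common_neighbor hC (w := y) (by decide) h₄ (by decide) (by decide)
  have h₀₁ := color_ne_of_common_neighbor hC (w := y) (by decide) h₁ (by decide) (by decide)
  revert h₁₂ h₂₃ h₃₄ h₄₀ h₀₁
  cases C y <;> cases C a₁ <;> cases C a₂ <;> cases C a₃ <;> cases C a₄ <;> decide

theorem cycleFiveBlowup_induce_ne_vArrows2 (x : ZMod 5 × Fin 2) :
    VArrows2 (cycleFiveBlowup.induce {v | v ≠ x}) (Jgraph 3) (Jgraph 3) := by
  have hx : Set.BijOn (lexProdCycleAddRight x) {v | v ≠ 0} {v | v ≠ x} :=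
    ((Set.bijOn_singleton (f := lexProdCycleAddRight x)).2 (zero_add x)).compl
      (lexProdCycleAddRight x).bijective
  exact (vArrows2_jgraph_three_of_hasMonoP3 hasMonoP3_cycleFiveBlowup_induce_ne_zero).map
    ((lexProdCycleAddRight x).induce hx).toEmbedding

theorem cycleFiveBlowup_induce_ne_cliqueFree (x : ZMod 5 × Fin 2) :
    (cycleFiveBlowup.induce {v | v ≠ x}).CliqueFree 3 :=
  cycle_five_cliqueFree_three.of_hom ((lexProdBotFst _).comp (Embedding.induce _).toHom)

end DeletedBlowup

/-- The graph obtained from `C_5[2K_1]` by deleting one vertex is triangle-free and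
vertex-arrows `(P_3, P_3) = (J_3, J_3)`; hence `F_v(J_3,J_3;3) ≤ 9`. -/
theorem Fv_J3_J3_le_nine :
    (∀ x : ZMod 5 × Fin 2,
      ((lexProd (cycle 5) (⊥ : SimpleGraph (Fin 2))).induce {v | v ≠ x}).CliqueFree 3 ∧
      VArrows2 ((lexProd (cycle 5) (⊥ : SimpleGraph (Fin 2))).induce {v | v ≠ x})
        (Jgraph 3) (Jgraph 3)) ∧
    Fv2 (Jgraph 3) (Jgraph 3) 3 ≤ 9 :=
  ⟨fun x => ⟨cycleFiveBlowup_induce_ne_cliqueFree x, cycleFiveBlowup_induce_ne_vArrows2 x⟩,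
    fv2_le_of_card_eq (by decide) (cycleFiveBlowup_induce_ne_cliqueFree 0)
      (cycleFiveBlowup_induce_ne_vArrows2 0)⟩
end

section
/- If G vertex-arrows (K_3, K_3), then the lexicographic product G[E_{2k-1}] vertex-arrows (K_{k,k,k}, K_{k,k,k}) for every k ≥ 1. -/
open SimpleGraph

open Finset in
lemma exists_monochromatic_fin_embedding {ι : Type*} [Fintype ι] {k : ℕ}
    (hk : 2 * k ≤ Fintype.card ι + 1) (c : ι → Bool) :
    ∃ b, ∃ e : Fin k ↪ ι, ∀ a, c (e a) = b := by
  classical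
  have hsplit : #{i | c i = true} + #{i | c i = false} = Fintype.card ι := by
    simpa using Finset.card_filter_add_card_filter_not (s := Finset.univ) (fun i => c i = true)
  obtain ⟨b, hb⟩ : ∃ b, k ≤ #{i | c i = b} := by
    by_cases htrue : k ≤ #{i | c i = true}
    · exact ⟨true, htrue⟩
    · exact ⟨false, by omega⟩
  obtain ⟨e⟩ := Function.Embedding.nonempty_of_card_le (α := Fin k) (β := {i // c i = b})
    (by simpa [Fintype.card_subtype] using hb)
  exact ⟨b, e.trans (Function.Embedding.subtype _), fun a => (e a).2⟩

lemma Copies.completeMultipartiteGraph_lexProd {ι α β γ : Type*} {G : SimpleGraph α}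
    (H : SimpleGraph γ) {S : Set α} {T : Set (α × γ)} (hG : Copies G (completeGraph ι) S)
    (hT : ∀ v ∈ S, ∃ e : β ↪ γ, ∀ b, (v, e b) ∈ T) :
    Copies (lexProd G H) (completeMultipartiteGraph fun _ : ι => β) T := by
  obtain ⟨g, hg, hgS⟩ := hG
  choose e he using fun i => hT (g i) (hgS i)
  refine ⟨⟨fun p => (g p.1, e p.1 p.2), ?_⟩, fun p q hpq => Or.inl (hg _ _ hpq), fun p => he _ _⟩
  rintro ⟨i, a⟩ ⟨j, b⟩ h
  obtain rfl : i = j := g.injective (Prod.ext_iff.1 h).1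
  obtain rfl : a = b := (e i).injective (Prod.ext_iff.1 h).2
  rfl

theorem blowup_arrows_Kkkk_general {α : Type*} (G : SimpleGraph α)
    (hG : VArrows2 G (Kc 3) (Kc 3)) (k : ℕ) :
    VArrows2 (lexProd G (⊥ : SimpleGraph (Fin (2 * k - 1))))
      (completeMultipartiteGraph (fun _ : Fin 3 => Fin k))
      (completeMultipartiteGraph (fun _ : Fin 3 => Fin k)) := by
  intro C
  have hcard : 2 * k ≤ Fintype.card (Fin (2 * k - 1)) + 1 := by simp only [Fintype.card_fin]; omega
  -- colour each vertex of `G` by a majority colour of its fibre of size `2k - 1`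
  choose majority hmajority using fun v => exists_monochromatic_fin_embedding hcard fun j => C (v, j)
  have hfibre (b : Bool) (v : α) (hv : majority v = b) :
      ∃ e : Fin k ↪ Fin (2 * k - 1), ∀ a, (v, e a) ∈ {x | C x = b} := by
    obtain ⟨e, he⟩ := hmajority v
    exact ⟨e, fun a => (he a).trans hv⟩
  rcases hG majority with hred | hblue
  · exact Or.inl (hred.completeMultipartiteGraph_lexProd _ (hfibre true))
  · exact Or.inr (hblue.completeMultipartiteGraph_lexProd _ (hfibre false))

/-- If `G → (K_3,K_3)^v`, then `G[E_{2k-1}] → (K_{k,k,k},K_{k,k,k})^v` for all `k ≥ 1`. -/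
theorem blowup_arrows_Kkkk {α : Type*} (G : SimpleGraph α)
    (hG : VArrows2 G (Kc 3) (Kc 3)) (k : ℕ) (hk : 1 ≤ k) :
    VArrows2 (lexProd G (⊥ : SimpleGraph (Fin (2 * k - 1))))
      (completeMultipartiteGraph (fun _ : Fin 3 => Fin k))
      (completeMultipartiteGraph (fun _ : Fin 3 => Fin k)) :=
  blowup_arrows_Kkkk_general G hG k
end

section
/- If a graph G vertex-arrows (K_3, K_3) and G is K_4-free, then the join K_1 + G is K_5-free and edge-arrows (K_3, K_3). -/
open SimpleGraph

/-!
A `K₅` in `K₁ + G` meets `G` in at least four vertices, so it would contain a `K₄` of `G`.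
For the arrowing, color each vertex `x` of `G` by the color of the edge `ux`. The vertex-arrowing
gives a triangle `xyz` of `G` with `ux, uy, uz` of one color: if one of its edges also has that
color it closes a triangle with `u`, and otherwise `xyz` is a triangle of the other color.
-/

section Triangles

variable {α : Type*} {G : SimpleGraph α} {S : Set α}

theorem copies_Kc_three_iff :
    Copies G (Kc 3) S ↔
      ∃ a b c, G.Adj a b ∧ G.Adj a c ∧ G.Adj b c ∧ a ∈ S ∧ b ∈ S ∧ c ∈ S := by
  constructor
  · rintro ⟨f, hf, hS⟩
    exact ⟨f 0, f 1, f 2, hf 0 1 (by simp [Kc]), hf 0 2 (by simp [Kc]), hf 1 2 (by simp [Kc]),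
      hS 0, hS 1, hS 2⟩
  · rintro ⟨a, b, c, hab, hac, hbc, ha, hb, hc⟩
    refine ⟨⟨![a, b, c], ?_⟩, ?_, ?_⟩
    · intro i j hij
      fin_cases i <;> fin_cases j <;>
        simp_all [hab.ne, hac.ne, hbc.ne, hab.ne', hac.ne', hbc.ne']
    · show ∀ i j, _ → G.Adj (![a, b, c] i) (![a, b, c] j)
      intro i j hij
      fin_cases i <;> fin_cases j <;> simp_all [Kc, hab.symm, hac.symm, hbc.symm]
    · intro i
      fin_cases i <;> assumption

theorem copies_Kc_three_univ {a b c : α} (hab : G.Adj a b) (hac : G.Adj a c) (hbc : G.Adj b c) :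
    Copies G (Kc 3) Set.univ :=
  copies_Kc_three_iff.2 ⟨a, b, c, hab, hac, hbc, trivial, trivial, trivial⟩

theorem Copies.mono {β : Type*} {G' : SimpleGraph α} {F : SimpleGraph β} (hle : G ≤ G')
    (h : Copies G F S) : Copies G' F S :=
  let ⟨f, hf, hS⟩ := h
  ⟨f, fun a b hab => hle (hf a b hab), hS⟩

theorem copies_Kc_three_of_red_spokes {Γ R : SimpleGraph α} {u a b c : α}
    (hab : Γ.Adj a b) (hac : Γ.Adj a c) (hbc : Γ.Adj b c)
    (hua : R.Adj u a) (hub : R.Adj u b) (huc : R.Adj u c) :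
    Copies R (Kc 3) Set.univ ∨ Copies (Γ \ R) (Kc 3) Set.univ := by
  by_cases rab : R.Adj a b
  · exact .inl (copies_Kc_three_univ hua hub rab)
  by_cases rac : R.Adj a c
  · exact .inl (copies_Kc_three_univ hua huc rac)
  by_cases rbc : R.Adj b c
  · exact .inl (copies_Kc_three_univ hub huc rbc)
  exact .inr (copies_Kc_three_univ ⟨hab, rab⟩ ⟨hac, rac⟩ ⟨hbc, rbc⟩)

theorem copies_Kc_three_of_blue_spokes {Γ R : SimpleGraph α} {u a b c : α}
    (hab : Γ.Adj a b) (hac : Γ.Adj a c) (hbc : Γ.Adj b c)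
    (hua : (Γ \ R).Adj u a) (hub : (Γ \ R).Adj u b) (huc : (Γ \ R).Adj u c) :
    Copies R (Kc 3) Set.univ ∨ Copies (Γ \ R) (Kc 3) Set.univ := by
  have hle : Γ \ (Γ \ R) ≤ R := fun _ _ h => by_contra fun hr => h.2 ⟨h.1, hr⟩
  exact (copies_Kc_three_of_red_spokes hab hac hbc hua hub huc).symm.imp_left (Copies.mono hle)

end Triangles

section Join

variable {α β : Type*} {H : SimpleGraph β} {G : SimpleGraph α}

@[simp]
theorem graphJoin_adj_inl_inl {a b : β} : (graphJoin H G).Adj (.inl a) (.inl b) ↔ H.Adj a b := by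
  simp [graphJoin]

@[simp]
theorem graphJoin_adj_inr_inr {a b : α} : (graphJoin H G).Adj (.inr a) (.inr b) ↔ G.Adj a b := by
  simp [graphJoin]

theorem graphJoin_adj_inl_inr (a : β) (b : α) : (graphJoin H G).Adj (.inl a) (.inr b) := by
  simp [graphJoin]

theorem SimpleGraph.IsClique.card_lt_of_cliqueFree {n : ℕ} {s : Finset α} (hs : G.IsClique s)
    (hG : G.CliqueFree n) : s.card < n := by
  by_contra! hn
  obtain ⟨t, hts, ht⟩ := Finset.exists_subset_card_eq hn
  exact hG t ⟨hs.subset hts, ht⟩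

theorem graphJoin_cliqueFree {m n : ℕ} (hH : H.CliqueFree (m + 1)) (hG : G.CliqueFree (n + 1)) :
    (graphJoin H G).CliqueFree (m + n + 1) := by
  intro t ht
  have hleft : H.IsClique (t.toLeft : Set β) := fun a ha b hb hab =>
    graphJoin_adj_inl_inl.1 <| ht.1 (Finset.mem_toLeft.1 ha) (Finset.mem_toLeft.1 hb) (by simpa)
  have hright : G.IsClique (t.toRight : Set α) := fun a ha b hb hab =>
    graphJoin_adj_inr_inr.1 <| ht.1 (Finset.mem_toRight.1 ha) (Finset.mem_toRight.1 hb) (by simpa)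
  have := hleft.card_lt_of_cliqueFree hH
  have := hright.card_lt_of_cliqueFree hG
  have := t.card_toLeft_add_card_toRight
  have := ht.2
  omega

theorem graphJoin_eArrows2_Kc_three (u : β) (hG : VArrows2 G (Kc 3) (Kc 3)) :
    EArrows2 (graphJoin H G) (Kc 3) (Kc 3) := by
  classical
  intro R _
  rcases hG fun v => decide (R.Adj (.inl u) (.inr v)) with hred | hblue
  · obtain ⟨a, b, c, hab, hac, hbc, ha, hb, hc⟩ := copies_Kc_three_iff.1 hred
    simp only [Set.mem_ofPred_eq, decide_eq_true_eq] at ha hb hc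
    exact copies_Kc_three_of_red_spokes (graphJoin_adj_inr_inr.2 hab)
      (graphJoin_adj_inr_inr.2 hac) (graphJoin_adj_inr_inr.2 hbc) ha hb hc
  · obtain ⟨a, b, c, hab, hac, hbc, ha, hb, hc⟩ := copies_Kc_three_iff.1 hblue
    simp only [Set.mem_ofPred_eq, decide_eq_false_iff_not] at ha hb hc
    exact copies_Kc_three_of_blue_spokes (graphJoin_adj_inr_inr.2 hab)
      (graphJoin_adj_inr_inr.2 hac) (graphJoin_adj_inr_inr.2 hbc)
      ⟨graphJoin_adj_inl_inr u a, ha⟩ ⟨graphJoin_adj_inl_inr u b, hb⟩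
      ⟨graphJoin_adj_inl_inr u c, hc⟩

end Join

/-- If `G` is `K_4`-free and `G → (K_3,K_3)^v`, then `K_1 + G` is `K_5`-free and
`K_1 + G → (K_3,K_3)^e`. -/
theorem join_K1_edge_arrows_K3 {α : Type*} (G : SimpleGraph α)
    (hfree : G.CliqueFree 4) (harr : VArrows2 G (Kc 3) (Kc 3)) :
    (graphJoin (Kc 1) G).CliqueFree 5 ∧ EArrows2 (graphJoin (Kc 1) G) (Kc 3) (Kc 3) :=
  ⟨graphJoin_cliqueFree (m := 1) (n := 3) (cliqueFree_of_card_lt (by simp)) hfree,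
    graphJoin_eArrows2_Kc_three 0 harr⟩
end
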